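/- arXiv:1410.7044 — 5 statements merged into one kernel-verified Lean document; each statement's English description precedes it below -/
import Mathlib

section
/- Let T be a tournament on n vertices, and let σ = (S_1,S_2,S_3) be a triple of pairwise disjoint vertex subsets with |S_1|,|S_2|,|S_3| ≥ c·n for some c > 0. Fix distinct i,j ∈ {1,2,3} and set l = 6-i-j. Then σ is an (i,j)-triple, or σ is an (i,l)-triple, or there exist disjoint subsets A, B ⊆ V(T) with |A|, |B| ≥ (c/2)·n such that A is complete to B. -/
/-!
Any ordering of `S i` works for the triple condition as soon as both neighbourhood unions
`⋃_{v ∈ S i} N(v, j)` and `⋃_{v ∈ S i} N(v, l)` reach half of `S j`, resp. `S l`: the two minima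
then exist and one of them is the smaller. If instead, say, `⋃_{v ∈ S i} N(v, k)` misses more
than half of `S k`, the missed vertices of `S k` see no backward edge from `S i`, so in the
tournament they form, together with `S i`, a large complete pair.
-/

/-- A tournament: an irreflexive relation such that for distinct vertices exactly one
direction is an edge. -/
def IsTournament {V : Type*} (E : V → V → Prop) : Prop :=
  (∀ v, ¬ E v v) ∧ ∀ u v : V, u ≠ v → (E u v ↔ ¬ E v u)

/-- For `v ∈ S i` and `j ≠ i`, the set `N^σ(v,j)`: vertices of `S j` joined to `v`
by a "backward" edge relative to the order of the indices. -/
def Nbhd {V : Type*} [DecidableEq V] (E : V → V → Prop) [DecidableRel E]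
    (S : Fin 3 → Finset V) (i j : Fin 3) (v : V) : Finset V :=
  if i < j then (S j).filter (fun w => E w v) else (S j).filter (fun w => E v w)

/-- `σ = (S 0, S 1, S 2)` is an `(i,j)`-triple: there is an ordering (a duplicate-free
list) `v_1, ..., v_{|S i|}` of `S i` such that
`min {k : |N(v_1,j) ∪ ... ∪ N(v_k,j)| ≥ |S j|/2} ≥ min {k : |N(v_1,l) ∪ ... ∪ N(v_k,l)| ≥ |S l|/2}`
where `l` is the remaining index, and both minima exist. -/
def IsIJTriple {V : Type*} [DecidableEq V] (E : V → V → Prop) [DecidableRel E]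
    (S : Fin 3 → Finset V) (i j : Fin 3) : Prop :=
  ∃ L : List V, L.Nodup ∧ L.toFinset = S i ∧
    (let A : Set ℕ :=
      {k | (S j).card ≤ 2 * (((L.take k).toFinset).biUnion (Nbhd E S i j)).card};
    let B : Set ℕ :=
      {k | (S (-(i + j))).card ≤
        2 * (((L.take k).toFinset).biUnion (Nbhd E S i (-(i + j)))).card};
    A.Nonempty ∧ B.Nonempty ∧ sInf B ≤ sInf A)

/-- `A` is complete to `B`: every vertex of `A` has an edge directed to every vertex of `B`. -/
def CompleteTo {V : Type*} (E : V → V → Prop) (A B : Finset V) : Prop :=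
  ∀ a ∈ A, ∀ b ∈ B, E a b

def HasCompletePair {V : Type*} (E : V → V → Prop) (r : ℝ) : Prop :=
  ∃ A B : Finset V, Disjoint A B ∧ r ≤ (A.card : ℝ) ∧ r ≤ (B.card : ℝ) ∧ CompleteTo E A B

section Nbhd

variable {V : Type*} [DecidableEq V] {E : V → V → Prop} [DecidableRel E]
  {S : Fin 3 → Finset V} {i k : Fin 3}

theorem Nbhd_subset (v : V) : Nbhd E S i k v ⊆ S k := by
  unfold Nbhd
  split <;> exact Finset.filter_subset _ _

theorem biUnion_Nbhd_subset : (S i).biUnion (Nbhd E S i k) ⊆ S k :=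
  Finset.biUnion_subset.2 fun v _ => Nbhd_subset v

theorem completeTo_sdiff_biUnion_Nbhd_of_lt (hT : IsTournament E)
    (hdisj : Disjoint (S i) (S k)) (hik : i < k) :
    CompleteTo E (S i) (S k \ (S i).biUnion (Nbhd E S i k)) := by
  intro a ha b hb
  obtain ⟨hbk, hbU⟩ := Finset.mem_sdiff.1 hb
  have hne : a ≠ b := fun h => Finset.disjoint_left.1 hdisj ha (h ▸ hbk)
  refine (hT.2 a b hne).2 fun hba => hbU (Finset.mem_biUnion.2 ⟨a, ha, ?_⟩)
  simp only [Nbhd, if_pos hik, Finset.mem_filter]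
  exact ⟨hbk, hba⟩

theorem completeTo_sdiff_biUnion_Nbhd_of_not_lt (hT : IsTournament E)
    (hdisj : Disjoint (S i) (S k)) (hik : ¬ i < k) :
    CompleteTo E (S k \ (S i).biUnion (Nbhd E S i k)) (S i) := by
  intro b hb a ha
  obtain ⟨hbk, hbU⟩ := Finset.mem_sdiff.1 hb
  have hne : b ≠ a := fun h => Finset.disjoint_left.1 hdisj ha (h ▸ hbk)
  refine (hT.2 b a hne).2 fun hab => hbU (Finset.mem_biUnion.2 ⟨a, ha, ?_⟩)
  simp only [Nbhd, if_neg hik, Finset.mem_filter]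
  exact ⟨hbk, hab⟩

theorem hasCompletePair_of_not_covers (hT : IsTournament E) (hdisj : Disjoint (S i) (S k))
    {r : ℝ} (hi : 2 * r ≤ (S i).card) (hk : 2 * r ≤ (S k).card)
    (hcover : ¬ (S k).card ≤ 2 * ((S i).biUnion (Nbhd E S i k)).card) :
    HasCompletePair E r := by
  have hsub : (S i).biUnion (Nbhd E S i k) ⊆ S k := biUnion_Nbhd_subset
  set B := S k \ (S i).biUnion (Nbhd E S i k)
  have hB : (S k).card ≤ 2 * B.card := by
    have := Finset.card_le_card hsub
    rw [Finset.card_sdiff_of_subset hsub]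
    omega
  have hBr : r ≤ B.card := by
    have : ((S k).card : ℝ) ≤ 2 * B.card := by exact_mod_cast hB
    linarith
  have hir : r ≤ (S i).card := by
    have : (0 : ℝ) ≤ (S i).card := Nat.cast_nonneg _
    linarith
  have hdisjB : Disjoint (S i) B := hdisj.mono_right Finset.sdiff_subset
  by_cases hik : i < k
  · exact ⟨S i, B, hdisjB, hir, hBr, completeTo_sdiff_biUnion_Nbhd_of_lt hT hdisj hik⟩
  · exact ⟨B, S i, hdisjB.symm, hBr, hir, completeTo_sdiff_biUnion_Nbhd_of_not_lt hT hdisj hik⟩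

theorem isIJTriple_or_isIJTriple_of_covers {j : Fin 3}
    (hj : (S j).card ≤ 2 * ((S i).biUnion (Nbhd E S i j)).card)
    (hl : (S (-(i + j))).card ≤ 2 * ((S i).biUnion (Nbhd E S i (-(i + j)))).card) :
    IsIJTriple E S i j ∨ IsIJTriple E S i (-(i + j)) := by
  have hjl : -(i + -(i + j)) = j := by abel
  obtain ⟨L, hnd, hL⟩ : ∃ L : List V, L.Nodup ∧ L.toFinset = S i :=
    ⟨(S i).toList, Finset.nodup_toList _, Finset.toList_toFinset _⟩
  have hfull : (L.take L.length).toFinset = S i := by rw [List.take_length, hL]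
  unfold IsIJTriple
  rw [hjl]
  refine (le_total _ _).imp (fun h => ⟨L, hnd, hL, ⟨L.length, ?_⟩, ⟨L.length, ?_⟩, h⟩)
    (fun h => ⟨L, hnd, hL, ⟨L.length, ?_⟩, ⟨L.length, ?_⟩, h⟩) <;>
  simpa only [Set.mem_ofPred_eq, hfull]

end Nbhd

theorem stmt7_general {V : Type*} [Fintype V] [DecidableEq V] (E : V → V → Prop)
    [DecidableRel E] (hT : IsTournament E) (S : Fin 3 → Finset V)
    (hdisj : ∀ i j, i ≠ j → Disjoint (S i) (S j))
    (c : ℝ) (hsize : ∀ i, c * (Fintype.card V : ℝ) ≤ ((S i).card : ℝ))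
    (i j : Fin 3) (hij : i ≠ j) :
    IsIJTriple E S i j ∨ IsIJTriple E S i (-(i + j)) ∨
    (∃ A B : Finset V, Disjoint A B ∧ c / 2 * (Fintype.card V : ℝ) ≤ (A.card : ℝ) ∧
      c / 2 * (Fintype.card V : ℝ) ≤ (B.card : ℝ) ∧ CompleteTo E A B) := by
  have hil : i ≠ -(i + j) := by
    revert hij; fin_cases i <;> fin_cases j <;> decide
  have hsize' : ∀ k, 2 * (c / 2 * Fintype.card V) ≤ ((S k).card : ℝ) := fun k => by
    linarith [hsize k]
  by_cases hj : (S j).card ≤ 2 * ((S i).biUnion (Nbhd E S i j)).card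
  · by_cases hl : (S (-(i + j))).card ≤ 2 * ((S i).biUnion (Nbhd E S i (-(i + j)))).card
    · exact (isIJTriple_or_isIJTriple_of_covers hj hl).elim Or.inl (Or.inr ∘ Or.inl)
    · exact Or.inr <| Or.inr <|
        hasCompletePair_of_not_covers hT (hdisj _ _ hil) (hsize' i) (hsize' _) hl
  · exact Or.inr <| Or.inr <|
      hasCompletePair_of_not_covers hT (hdisj _ _ hij) (hsize' i) (hsize' j) hj

/-- For any triple of disjoint linear-size sets and any distinct indices `i, j`,
the triple is an `(i,j)`-triple, or an `(i,l)`-triple for the remaining index `l`,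
or there are two disjoint sets of size at least `(c/2)·n`, one complete to the other. -/
theorem stmt7 {V : Type*} [Fintype V] [DecidableEq V] (E : V → V → Prop)
    [DecidableRel E] (hT : IsTournament E) (S : Fin 3 → Finset V)
    (hdisj : ∀ i j, i ≠ j → Disjoint (S i) (S j))
    (c : ℝ) (hc : 0 < c) (hsize : ∀ i, c * (Fintype.card V : ℝ) ≤ ((S i).card : ℝ))
    (i j : Fin 3) (hij : i ≠ j) :
    IsIJTriple E S i j ∨ IsIJTriple E S i (-(i + j)) ∨
    (∃ A B : Finset V, Disjoint A B ∧ c / 2 * (Fintype.card V : ℝ) ≤ (A.card : ℝ) ∧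
      c / 2 * (Fintype.card V : ℝ) ≤ (B.card : ℝ) ∧ CompleteTo E A B) :=
  stmt7_general E hT S hdisj c hsize i j hij
end

section
/- Let T be a tournament and S_1, S_2, S_3 pairwise disjoint subsets of V(T) each of size at least c·n (n = |T|). If |∪_{v ∈ S_i} N^σ(v,j)| < |S_j|/2 for distinct i,j, then there exist two disjoint sets A, B of vertices of T with |A|, |B| ≥ (c/2)·n such that one of them is complete to the other. -/
/-! The vertices of `S j` lying in no `N^σ(v,j)` make up more than half of `S j`. By the
definition of `N^σ`, none of them has an edge to or from `S i` in the direction that `N^σ`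
records, so in a tournament all edges between them and `S i` point the other way. -/

theorem IsTournament.completeTo_of_forall_not {V : Type*} {E : V → V → Prop}
    (hT : IsTournament E) {A B : Finset V} (hAB : Disjoint A B)
    (h : ∀ a ∈ A, ∀ b ∈ B, ¬ E b a) : CompleteTo E A B :=
  fun a ha b hb => (hT.2 a b (hAB.forall_ne_finset ha hb)).mpr (h a ha b hb)

theorem completeTo_or_completeTo_sdiff_biUnion_nbhd {V : Type*} [DecidableEq V]
    {E : V → V → Prop} [DecidableRel E] (hT : IsTournament E) (S : Fin 3 → Finset V)
    {i j : Fin 3} (hdisj : Disjoint (S i) (S j)) :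
    CompleteTo E (S i) (S j \ (S i).biUnion (Nbhd E S i j)) ∨
      CompleteTo E (S j \ (S i).biUnion (Nbhd E S i j)) (S i) := by
  have hdisj' : Disjoint (S i) (S j \ (S i).biUnion (Nbhd E S i j)) :=
    hdisj.mono_right Finset.sdiff_subset
  have not_mem : ∀ v ∈ S i, ∀ w ∈ S j \ (S i).biUnion (Nbhd E S i j), w ∉ Nbhd E S i j v :=
    fun v hv w hw hmem => (Finset.mem_sdiff.mp hw).2 (Finset.mem_biUnion.mpr ⟨v, hv, hmem⟩)
  by_cases hlt : i < j
  · refine .inl (hT.completeTo_of_forall_not hdisj' fun v hv w hw hwv => ?_)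
    exact not_mem v hv w hw (by simp [Nbhd, hlt, (Finset.mem_sdiff.mp hw).1, hwv])
  · refine .inr (hT.completeTo_of_forall_not hdisj'.symm fun w hw v hv hvw => ?_)
    exact not_mem v hv w hw (by simp [Nbhd, hlt, (Finset.mem_sdiff.mp hw).1, hvw])

theorem Finset.card_lt_two_mul_card_sdiff {α : Type*} [DecidableEq α] {s t : Finset α}
    (h : 2 * t.card < s.card) : s.card < 2 * (s \ t).card := by
  have := Finset.card_le_card_sdiff_add_card (s := s) (t := t)
  omega

theorem stmt8_general {V : Type*} [Fintype V] [DecidableEq V] (E : V → V → Prop)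
    [DecidableRel E] (hT : IsTournament E) (S : Fin 3 → Finset V)
    (hdisj : ∀ i j, i ≠ j → Disjoint (S i) (S j))
    (c : ℝ) (hsize : ∀ i, c * (Fintype.card V : ℝ) ≤ ((S i).card : ℝ))
    (i j : Fin 3) (hij : i ≠ j)
    (hsmall : 2 * (((S i).biUnion (Nbhd E S i j)).card) < (S j).card) :
    ∃ A B : Finset V, Disjoint A B ∧ c / 2 * (Fintype.card V : ℝ) ≤ (A.card : ℝ) ∧
      c / 2 * (Fintype.card V : ℝ) ≤ (B.card : ℝ) ∧
      (CompleteTo E A B ∨ CompleteTo E B A) := by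
  set B := S j \ (S i).biUnion (Nbhd E S i j)
  have hB : ((S j).card : ℝ) < 2 * B.card := by
    exact_mod_cast Finset.card_lt_two_mul_card_sdiff hsmall
  refine ⟨S i, B, (hdisj i j hij).mono_right Finset.sdiff_subset, ?_, ?_,
    completeTo_or_completeTo_sdiff_biUnion_nbhd hT S (hdisj i j hij)⟩
  · linarith [hsize i, (Nat.cast_nonneg (S i).card : (0 : ℝ) ≤ _)]
  · linarith [hsize j]

/-- If `|⋃_{v ∈ S i} N^σ(v,j)| < |S j|/2` for distinct indices `i, j`, then there are
two disjoint sets of size at least `(c/2)·n` such that one is complete to the other. -/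
theorem stmt8 {V : Type*} [Fintype V] [DecidableEq V] (E : V → V → Prop)
    [DecidableRel E] (hT : IsTournament E) (S : Fin 3 → Finset V)
    (hdisj : ∀ i j, i ≠ j → Disjoint (S i) (S j))
    (c : ℝ) (hc : 0 < c) (hsize : ∀ i, c * (Fintype.card V : ℝ) ≤ ((S i).card : ℝ))
    (i j : Fin 3) (hij : i ≠ j)
    (hsmall : 2 * (((S i).biUnion (Nbhd E S i j)).card) < (S j).card) :
    ∃ A B : Finset V, Disjoint A B ∧ c / 2 * (Fintype.card V : ℝ) ≤ (A.card : ℝ) ∧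
      c / 2 * (Fintype.card V : ℝ) ≤ (B.card : ℝ) ∧
      (CompleteTo E A B ∨ CompleteTo E B A) :=
  stmt8_general E hT S hdisj c hsize i j hij hsmall
end

section
/- Let T be a tournament with vertex subsets V_1,...,V_k pairwise disjoint, each nonempty, such that each pair (V_i, V_j) is η-regular with d(V_i,V_j) ≥ λ and d(V_j,V_i) ≥ λ, where η = η(k, λ) is sufficiently small. Then for every tournament H on vertices x_1,...,x_k there exist vertices v_i ∈ V_i such that the map x_i ↦ v_i is an isomorphism from H to the subtournament of T induced by {v_1,...,v_k}. -/
/-! Embed the vertices of `H` greedily, one at a time, keeping for every vertex `j` not yet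
embedded a candidate set `C j ⊆ V_j` of vertices whose edges to everything embedded so far are
oriented as in `H`. If `η|V_i|` or more vertices of `C i` had fewer than `δ|C j|` correctly
oriented edges to `C j`, they would form a large subset of `V_i` of density below `δ` towards
`C j`, contradicting regularity. So while the candidate sets have size above `k η |V_i|`, some
`v ∈ C i` is typical towards every later `C j`, and embedding it shrinks each `C j` by a factor of
at most `δ = λ/2`. With `η = δ^(k+1)/(k+1)` the candidate sets never become too small. -/

open Finset

/-- The directed density `d(A,B) = e(A,B)/(|A||B|)`, where `e(A,B)` is the number of
edges directed from `A` to `B`. -/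
noncomputable def density {V : Type*} (E : V → V → Prop) [DecidableRel E]
    (A B : Finset V) : ℝ :=
  ((((A ×ˢ B).filter fun p => E p.1 p.2).card : ℝ)) / ((A.card : ℝ) * (B.card : ℝ))

/-- The pair `(A,B)` is `η`-regular: all `X ⊆ A`, `Y ⊆ B` with `|X| ≥ η|A|`,
`|Y| ≥ η|B|` satisfy `|d(X,Y) - d(A,B)| ≤ η`. -/
def IsRegularPair {V : Type*} (E : V → V → Prop) [DecidableRel E]
    (A B : Finset V) (η : ℝ) : Prop :=
  ∀ X ⊆ A, ∀ Y ⊆ B, η * (A.card : ℝ) ≤ (X.card : ℝ) →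
    η * (B.card : ℝ) ≤ (Y.card : ℝ) → |density E X Y - density E A B| ≤ η


section Density

variable {V : Type*}

lemma card_filter_product_eq_sum (R : V → V → Prop) [DecidableRel R] (X Y : Finset V) :
    #{p ∈ X ×ˢ Y | R p.1 p.2} = ∑ v ∈ X, #{w ∈ Y | R v w} := by
  simp only [card_filter, sum_product]

lemma density_congr {R R' : V → V → Prop} [DecidableRel R] [DecidableRel R']
    (h : ∀ v w, R v w ↔ R' v w) (X Y : Finset V) : density R X Y = density R' X Y := by
  simp only [density, h]

lemma density_swap (R : V → V → Prop) [DecidableRel R] (X Y : Finset V) :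
    density (fun v w => R w v) X Y = density R Y X := by
  have : #{p ∈ X ×ˢ Y | R p.2 p.1} = #{p ∈ Y ×ˢ X | R p.1 p.2} := by
    rw [card_filter, card_filter, sum_product, sum_product_right]
  rw [density, density, mul_comm, this]

lemma density_lt_of_forall_card_lt {R : V → V → Prop} [DecidableRel R] {X Y : Finset V} {δ : ℝ}
    (hX : X.Nonempty) (hlow : ∀ v ∈ X, (#{w ∈ Y | R v w} : ℝ) < δ * #Y) :
    density R X Y < δ := by
  have hY : 0 < (#Y : ℝ) := by
    obtain ⟨v, hv⟩ := hX
    by_contra! h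
    have := hlow v hv
    rw [le_antisymm h (#Y).cast_nonneg, mul_zero] at this
    exact this.not_ge (#_).cast_nonneg
  rw [density, div_lt_iff₀ (by have := hX.card_pos; positivity), card_filter_product_eq_sum]
  push_cast
  calc ∑ v ∈ X, (#{w ∈ Y | R v w} : ℝ) < ∑ _v ∈ X, δ * #Y := sum_lt_sum_of_nonempty hX hlow
    _ = δ * (#X * #Y) := by rw [sum_const, nsmul_eq_mul]; ring

lemma card_lt_of_forall_card_filter_lt {R : V → V → Prop} [DecidableRel R] {A X Y : Finset V}
    {η δ : ℝ} (hη : 0 < η) (hA : A.Nonempty)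
    (hdense : ∀ X ⊆ A, η * #A ≤ #X → δ ≤ density R X Y) (hXA : X ⊆ A)
    (hlow : ∀ v ∈ X, (#{w ∈ Y | R v w} : ℝ) < δ * #Y) : (#X : ℝ) < η * #A := by
  by_contra! h
  have hX : X.Nonempty := by
    rw [← card_pos, ← Nat.cast_pos (α := ℝ)]
    exact (mul_pos hη (Nat.cast_pos.mpr hA.card_pos)).trans_le h
  exact (density_lt_of_forall_card_lt hX hlow).not_ge (hdense X hXA h)

lemma IsRegularPair.density_sub_le {E : V → V → Prop} [DecidableRel E] {A B X Y : Finset V}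
    {η : ℝ} (h : IsRegularPair E A B η) (hX : X ⊆ A) (hY : Y ⊆ B) (hXA : η * #A ≤ #X)
    (hYB : η * #B ≤ #Y) : density E A B - η ≤ density E X Y := by
  linarith [(abs_le.mp (h X hX Y hY hXA hYB)).1]

lemma IsRegularPair.sub_le_density_ite {E : V → V → Prop} [DecidableRel E] {A B X Y : Finset V}
    {η lam : ℝ} (hAB : IsRegularPair E A B η) (hBA : IsRegularPair E B A η)
    (hdAB : lam ≤ density E A B) (hdBA : lam ≤ density E B A) (hX : X ⊆ A) (hY : Y ⊆ B)
    (hXA : η * #A ≤ #X) (hYB : η * #B ≤ #Y) (p : Prop) [Decidable p] :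
    lam - η ≤ density (fun v w => if p then E v w else E w v) X Y := by
  by_cases h : p
  · rw [density_congr (R' := E) (fun v w => by simp [h])]
    linarith [hAB.density_sub_le hX hY hXA hYB]
  · rw [density_congr (R' := fun v w => E w v) (fun v w => by simp [h]), density_swap]
    linarith [hBA.density_sub_le hY hX hYB hXA]

end Density

lemma exists_mem_forall_notMem_of_card_mul_lt {ι V : Type*} [DecidableEq V] (S : Finset ι)
    (D : Finset V) (B : ι → Finset V) {c : ℝ} (hB : ∀ j ∈ S, (#(B j) : ℝ) ≤ c)
    (hD : #S * c < #D) : ∃ v ∈ D, ∀ j ∈ S, v ∉ B j := by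
  have hunion : (#(S.biUnion B) : ℝ) < #D := calc
    (#(S.biUnion B) : ℝ) ≤ ∑ j ∈ S, (#(B j) : ℝ) := by exact_mod_cast card_biUnion_le
    _ ≤ ∑ _j ∈ S, c := sum_le_sum hB
    _ = #S * c := by rw [sum_const, nsmul_eq_mul]
    _ < #D := hD
  obtain ⟨v, hvD, hv⟩ := exists_mem_notMem_of_card_lt_card (by exact_mod_cast hunion)
  exact ⟨v, hvD, fun j hj hvj => hv (mem_biUnion.mpr ⟨j, hj, hvj⟩)⟩

lemma exists_mem_forall_le_card_filter {ι V : Type*} [DecidableEq V] (R : ι → V → V → Prop)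
    [∀ j, DecidableRel (R j)] {A D : Finset V} (C : ι → Finset V) (S : Finset ι) {η δ : ℝ}
    (hη : 0 < η) (hDA : D ⊆ A) (hdense : ∀ j ∈ S, ∀ X ⊆ A, η * #A ≤ #X → δ ≤ density (R j) X (C j))
    (hD : #S * (η * #A) < #D) : ∃ v ∈ D, ∀ j ∈ S, δ * #(C j) ≤ #{w ∈ C j | R j v w} := by
  have hA : A.Nonempty := by
    refine (card_pos.mp ?_).mono hDA
    exact_mod_cast (by positivity : (0 : ℝ) ≤ #S * (η * #A)).trans_lt hD
  obtain ⟨v, hvD, hv⟩ := exists_mem_forall_notMem_of_card_mul_lt S D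
    (fun j => {u ∈ D | (#{w ∈ C j | R j u w} : ℝ) < δ * #(C j)}) (fun j hj =>
      (card_lt_of_forall_card_filter_lt hη hA (hdense j hj) ((filter_subset _ _).trans hDA)
        (fun u hu => (mem_filter.mp hu).2)).le) hD
  exact ⟨v, hvD, fun j hj => by simpa [hvD] using hv j hj⟩

theorem exists_greedy_embedding {ι V : Type*} [DecidableEq ι] [DecidableEq V]
    (R : ι → ι → V → V → Prop) [∀ i j, DecidableRel (R i j)] (Vs : ι → Finset V) {η δ θ : ℝ}
    (hη : 0 < η) (hδ₀ : 0 ≤ δ) (hδ₁ : δ ≤ 1) (hne : ∀ i, (Vs i).Nonempty)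
    (hsymm : ∀ i j, i ≠ j → ∀ v w, R j i w v ↔ R i j v w)
    (hdense : ∀ i j, i ≠ j → ∀ X ⊆ Vs i, ∀ Y ⊆ Vs j, η * #(Vs i) ≤ #X → η * #(Vs j) ≤ #Y →
      δ ≤ density (R i j) X Y)
    (S : Finset ι) (hS : #S * η ≤ θ) (C : ι → Finset V) (hCV : ∀ j ∈ S, C j ⊆ Vs j)
    (hC : ∀ j ∈ S, θ * #(Vs j) ≤ δ ^ #S * #(C j)) :
    ∃ f : ι → V, (∀ j ∈ S, f j ∈ C j) ∧ ∀ i ∈ S, ∀ j ∈ S, i ≠ j → R i j (f i) (f j) := by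
  induction S using Finset.induction_on generalizing C with
  | empty => exact ⟨fun i => (hne i).choose, by simp, by simp⟩
  | insert i S hi ih =>
    rw [card_insert_of_notMem hi] at hS hC
    push_cast at hS
    have hθC : ∀ j ∈ insert i S, θ * #(Vs j) ≤ #(C j) := fun j hj =>
      (hC j hj).trans (mul_le_of_le_one_left (#_).cast_nonneg (pow_le_one₀ hδ₀ hδ₁))
    have hηθ : η ≤ θ := by nlinarith [(#S).cast_nonneg (α := ℝ)]
    have hηC : ∀ j ∈ insert i S, η * #(Vs j) ≤ #(C j) := fun j hj =>
      (mul_le_mul_of_nonneg_right hηθ (#_).cast_nonneg).trans (hθC j hj)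
    have hVi : (0 : ℝ) < #(Vs i) := Nat.cast_pos.mpr (hne i).card_pos
    obtain ⟨v, hvC, hdeg⟩ := exists_mem_forall_le_card_filter (R i) C S hη
      (hCV i (mem_insert_self i S))
      (fun j hj X hX hXc => hdense i j (ne_of_mem_of_not_mem hj hi).symm X hX (C j)
        (hCV j (mem_insert_of_mem hj)) hXc (hηC j (mem_insert_of_mem hj)))
      (calc #S * (η * #(Vs i)) < (#S + 1) * η * #(Vs i) := by nlinarith [mul_pos hη hVi]
        _ ≤ θ * #(Vs i) := mul_le_mul_of_nonneg_right hS hVi.le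
        _ ≤ #(C i) := hθC i (mem_insert_self i S))
    obtain ⟨f, hfC, hfR⟩ := ih (by linarith) (fun j => {w ∈ C j | R i j v w})
      (fun j hj => (filter_subset _ _).trans (hCV j (mem_insert_of_mem hj)))
      (fun j hj => calc
        θ * #(Vs j) ≤ δ ^ (#S + 1) * #(C j) := hC j (mem_insert_of_mem hj)
        _ = δ ^ #S * (δ * #(C j)) := by ring
        _ ≤ δ ^ #S * #{w ∈ C j | R i j v w} := by gcongr; exact hdeg j hj)
    have hfi : ∀ j ∈ S, Function.update f i v j = f j := fun j hj =>
      Function.update_of_ne (ne_of_mem_of_not_mem hj hi) _ _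
    refine ⟨Function.update f i v, ?_, ?_⟩
    · intro j hj
      rcases mem_insert.mp hj with rfl | hj
      · simpa using hvC
      · rw [hfi j hj]
        exact mem_of_mem_filter _ (hfC j hj)
    · have hvR : ∀ j ∈ S, R i j v (f j) := fun j hj => (mem_filter.mp (hfC j hj)).2
      intro j hj l hl hjl
      rcases mem_insert.mp hj with rfl | hjS <;> rcases mem_insert.mp hl with rfl | hlS
      · exact absurd rfl hjl
      · simpa [hfi l hlS] using hvR l hlS
      · simpa [hfi j hjS] using (hsymm l j hjl.symm _ _).mpr (hvR j hjS)
      · simpa [hfi j hjS, hfi l hlS] using hfR j hjS l hlS hjl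

theorem exists_embedding {ι V : Type*} [Fintype ι] [DecidableEq ι] [DecidableEq V]
    (R : ι → ι → V → V → Prop) [∀ i j, DecidableRel (R i j)] (Vs : ι → Finset V) {η δ : ℝ}
    (hη : 0 < η) (hδ₀ : 0 ≤ δ) (hδ₁ : δ ≤ 1) (hne : ∀ i, (Vs i).Nonempty)
    (hsymm : ∀ i j, i ≠ j → ∀ v w, R j i w v ↔ R i j v w)
    (hdense : ∀ i j, i ≠ j → ∀ X ⊆ Vs i, ∀ Y ⊆ Vs j, η * #(Vs i) ≤ #X → η * #(Vs j) ≤ #Y →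
      δ ≤ density (R i j) X Y)
    (hcard : Fintype.card ι * η ≤ δ ^ Fintype.card ι) :
    ∃ f : ι → V, (∀ i, f i ∈ Vs i) ∧ ∀ i j, i ≠ j → R i j (f i) (f j) := by
  obtain ⟨f, hfV, hfR⟩ := exists_greedy_embedding R Vs (θ := δ ^ Fintype.card ι) hη hδ₀ hδ₁ hne
    hsymm hdense univ (by rwa [card_univ]) Vs (fun _ _ => subset_rfl) (fun _ _ => by rw [card_univ])
  exact ⟨f, fun i => hfV i (mem_univ i), fun i j => hfR i (mem_univ i) j (mem_univ j)⟩

section Tournament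

variable {V : Type*} {T : V → V → Prop}

lemma IsTournament.ite_iff (hT : IsTournament T) {v w : V} (hvw : v ≠ w) (p : Prop)
    [Decidable p] : (if p then T v w else T w v) ↔ (p ↔ T v w) := by
  by_cases hp : p <;> simp [hp, hT.2 w v hvw.symm]

lemma IsTournament.ite_swap (hT : IsTournament T) {a b : V} (hab : a ≠ b) [Decidable (T a b)]
    [Decidable (T b a)] {W : Type*} (E : W → W → Prop) (v w : W) :
    (if T b a then E w v else E v w) ↔ (if T a b then E v w else E w v) := by
  by_cases h : T a b <;> simp [h, hT.2 b a hab.symm]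

end Tournament

/-- Embedding lemma for tournaments: for every `k` and `0 < λ < 1` there is `η > 0`
such that whenever disjoint nonempty sets `V₁,...,V_k` in a tournament `T` are pairwise
`η`-regular with both directed densities at least `λ`, every `k`-vertex tournament `H`
embeds with its `i`-th vertex in `V_i`. -/
theorem stmt13 (k : ℕ) (lam : ℝ) (h0 : 0 < lam) (h1 : lam < 1) :
    ∃ η : ℝ, 0 < η ∧ η < 1 ∧
      ∀ (V : Type) [Fintype V] (T : V → V → Prop) [DecidableRel T],
        IsTournament T →
        ∀ H : Fin k → Fin k → Prop, IsTournament H →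
        ∀ Vs : Fin k → Finset V,
          (∀ i j, i ≠ j → Disjoint (Vs i) (Vs j)) →
          (∀ i, (Vs i).Nonempty) →
          (∀ i j, i ≠ j → IsRegularPair T (Vs i) (Vs j) η) →
          (∀ i j, i ≠ j → lam ≤ density T (Vs i) (Vs j)) →
          ∃ f : Fin k → V, (∀ i, f i ∈ Vs i) ∧ Function.Injective f ∧
            ∀ i j, i ≠ j → (H i j ↔ T (f i) (f j)) := by
  classical
  set δ := lam / 2 with hδ
  have hδ₀ : 0 < δ := by positivity
  have hδ₁ : δ < 1 := by linarith
  set η := δ ^ (k + 1) / (k + 1)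
  have hη : 0 < η := by positivity
  have hkη : (k + 1) * η = δ ^ (k + 1) := mul_div_cancel₀ _ (by positivity)
  have hδ_succ_le : δ ^ (k + 1) ≤ δ := pow_le_of_le_one hδ₀.le hδ₁.le (by omega)
  have hδ_succ_le_pow : δ ^ (k + 1) ≤ δ ^ k := pow_le_pow_of_le_one hδ₀.le hδ₁.le (by omega)
  have hηδ : η ≤ δ := by nlinarith [k.cast_nonneg (α := ℝ)]
  have hηk : k * η ≤ δ ^ k := by linarith
  refine ⟨η, hη, by linarith, ?_⟩
  intro V _ T _ hT H hH Vs hdisj hne hreg hdens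
  obtain ⟨f, hf, hfH⟩ := exists_embedding (fun i j v w => if H i j then T v w else T w v) Vs
    hη hδ₀.le hδ₁.le hne (fun i j hij => hH.ite_swap hij T)
    (fun i j hij X hX Y hY hXc hYc => by
      linarith [(hreg i j hij).sub_le_density_ite (hreg j i hij.symm) (hdens i j hij)
        (hdens j i hij.symm) hX hY hXc hYc (H i j)])
    (by simpa using hηk)
  have hinj : Function.Injective f := fun i j hfij => by
    by_contra hij
    exact disjoint_left.mp (hdisj i j hij) (hf i) (hfij ▸ hf j)
  exact ⟨f, hf, hinj, fun i j hij => (hT.ite_iff (hinj.ne hij) _).mp (hfH i j hij)⟩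
end

section
/- Let χ = (S_1,...,S_k) be a strong (c,λ)-structure with |S_1| = ... = |S_k| = t in a tournament T, and suppose χ is (H_j, φ_j)-normal for j = 1,...,p with the images of the φ_j pairwise disjoint. If λ < 1/((p-1)^2 · (max_j |H_j|)^2), then the tournament induced by S_1 ∪ ... ∪ S_k contains the product tournament H_1^{φ_1} ⊕ ... ⊕ H_p^{φ_p} as a subtournament. -/
/-- A strong `(c,λ)`-structure: pairwise disjoint sets, each of size at least `c·n`,
with `d(S_i, S_j) ≥ 1 - λ` for `i < j`, and moreover every single vertex has density
at least `1 - λ` towards every later set and from every earlier set. -/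
def IsStrongStruct {V : Type*} [Fintype V] (E : V → V → Prop) [DecidableRel E]
    (c lam : ℝ) {k : ℕ} (S : Fin k → Finset V) : Prop :=
  (∀ i j, i ≠ j → Disjoint (S i) (S j)) ∧
  (∀ i, c * (Fintype.card V : ℝ) ≤ ((S i).card : ℝ)) ∧
  (∀ i j, i < j → 1 - lam ≤ density E (S i) (S j)) ∧
  (∀ i j, i < j → ∀ v ∈ S i, 1 - lam ≤ density E {v} (S j)) ∧
  (∀ i j, i < j → ∀ v ∈ S j, 1 - lam ≤ density E (S i) {v})

/-- `χ = (S_1,...,S_k)` (each set of size `t`) is `(H,φ)`-normal: for each vertex `h`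
of `H` there is an ordering `(v h 0, ..., v h (t-1))` of `S (φ h)` such that for every
`s`, the vertices `v h s` (over `h ∈ V(H)`) induce a copy of `H` via `h ↦ v h s`. -/
def IsNormal {V : Type*} (E : V → V → Prop) {k : ℕ} (S : Fin k → Finset V)
    (t : ℕ) {m : ℕ} (H : Fin m → Fin m → Prop) (φ : Fin m → Fin k) : Prop :=
  ∃ v : Fin m → Fin t → V,
    (∀ h, Function.Injective (v h)) ∧
    (∀ h s, v h s ∈ S (φ h)) ∧
    (∀ s : Fin t, ∀ a b : Fin m, a ≠ b → (H a b ↔ E (v a s) (v b s)))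

/-!
Each `H_j` comes with `t` vertex-disjoint copies, the `s`-th one formed by the `s`-th vertices
of the orderings of its parts; we pick one copy per factor, greedily in the order `j = 1, …, p`.
By the vertex-wise density condition of a strong structure, a fixed vertex of an already chosen
copy has a wrongly oriented edge to at most `λt` vertices of any other part, so at most
`(j - 1)·M²·λt < t` copies of `H_j` are spoiled by the earlier choices (`M = max_j |H_j|`), and
a good one remains. The chosen vertices lie in pairwise different parts, hence are distinct.
-/

open Finset

section Density

variable {V : Type*} (E : V → V → Prop) [DecidableRel E]

theorem density_singleton_left (w : V) (A : Finset V) :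
    density E {w} A = #{u ∈ A | E w u} / #A := by
  rw [density, singleton_product, filter_map, card_map, card_singleton, Nat.cast_one, one_mul]
  rfl

theorem density_singleton_right (A : Finset V) (w : V) :
    density E A {w} = #{u ∈ A | E u w} / #A := by
  rw [density, product_singleton, filter_map, card_map, card_singleton, Nat.cast_one, mul_one]
  rfl

theorem card_filter_not_le_of_one_sub_le {P : V → Prop} [DecidablePred P] {lam : ℝ}
    (A : Finset V) (h : 1 - lam ≤ #{u ∈ A | P u} / #A) :
    (#{u ∈ A | ¬P u} : ℝ) ≤ lam * #A := by
  rcases A.eq_empty_or_nonempty with rfl | hA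
  · simp
  rw [le_div_iff₀ (by exact_mod_cast hA.card_pos)] at h
  have hsplit : (#{u ∈ A | P u} : ℝ) + #{u ∈ A | ¬P u} = #A := by
    exact_mod_cast card_filter_add_card_filter_not P
  linarith

end Density

def PointsForward {V ι : Type*} [LT ι] (E : V → V → Prop) (i i' : ι) (w u : V) : Prop :=
  (i < i' → E w u) ∧ (i' < i → E u w)

namespace IsStrongStruct

variable {V : Type*} [Fintype V] {E : V → V → Prop} [DecidableRel E] {c lam : ℝ} {k : ℕ}
  {S : Fin k → Finset V}

open Classical in
theorem card_filter_not_pointsForward_le (hS : IsStrongStruct E c lam S) {i i' : Fin k}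
    (hii' : i ≠ i') {w : V} (hw : w ∈ S i) :
    (#{u ∈ S i' | ¬PointsForward E i i' w u} : ℝ) ≤ lam * #(S i') := by
  rcases hii'.lt_or_gt with h | h
  · have hfilter : {u ∈ S i' | ¬PointsForward E i i' w u} = {u ∈ S i' | ¬E w u} :=
      filter_congr fun u _ => by simp [PointsForward, h, h.not_gt]
    rw [hfilter]
    exact card_filter_not_le_of_one_sub_le _ <|
      density_singleton_left E w _ ▸ hS.2.2.2.1 i i' h w hw
  · have hfilter : {u ∈ S i' | ¬PointsForward E i i' w u} = {u ∈ S i' | ¬E u w} :=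
      filter_congr fun u _ => by simp [PointsForward, h, h.not_gt]
    rw [hfilter]
    exact card_filter_not_le_of_one_sub_le _ <|
      density_singleton_right E _ w ▸ hS.2.2.2.2 i' i h w hw

open Classical in
theorem card_filter_not_pointsForward_comp_le (hS : IsStrongStruct E c lam S) {i i' : Fin k}
    (hii' : i ≠ i') {w : V} (hw : w ∈ S i) {α : Type*} [Fintype α] {f : α → V}
    (hf : Function.Injective f) (hfS : ∀ y, f y ∈ S i') :
    (#{y | ¬PointsForward E i i' w (f y)} : ℝ) ≤ lam * #(S i') := by
  refine le_trans ?_ (hS.card_filter_not_pointsForward_le hii' hw)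
  exact_mod_cast card_le_card_of_injOn f (fun y hy => by simp_all) hf.injOn

open Classical in
theorem card_filter_not_forall_pointsForward_le (hS : IsStrongStruct E c lam S) {t : ℕ}
    (hcard : ∀ i, #(S i) = t) {m m' : ℕ} {φ : Fin m → Fin k} {φ' : Fin m' → Fin k}
    (hφ : ∀ a a', φ a ≠ φ' a') {w : Fin m → V} (hw : ∀ a, w a ∈ S (φ a))
    {α : Type*} [Fintype α] {f : Fin m' → α → V} (hf : ∀ a', Function.Injective (f a'))
    (hfS : ∀ a' y, f a' y ∈ S (φ' a')) :
    (#{y | ¬∀ a a', PointsForward E (φ a) (φ' a') (w a) (f a' y)} : ℝ) ≤ m * m' * (lam * t) := by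
  have hunion : ({y | ¬∀ a a', PointsForward E (φ a) (φ' a') (w a) (f a' y)} : Finset α) =
      (univ : Finset (Fin m × Fin m')).biUnion
        fun q => {y | ¬PointsForward E (φ q.1) (φ' q.2) (w q.1) (f q.2 y)} := by
    ext y
    simp
  calc (#{y | ¬∀ a a', PointsForward E (φ a) (φ' a') (w a) (f a' y)} : ℝ)
      ≤ ∑ q : Fin m × Fin m', (#{y | ¬PointsForward E (φ q.1) (φ' q.2) (w q.1) (f q.2 y)} : ℝ) := by
        rw [hunion]; exact_mod_cast card_biUnion_le
    _ ≤ ∑ _q : Fin m × Fin m', lam * t := by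
        gcongr with q
        exact hcard (φ' q.2) ▸
          hS.card_filter_not_pointsForward_comp_le (hφ _ _) (hw q.1) (hf q.2) (hfS q.2)
    _ = m * m' * (lam * t) := by simp [mul_assoc]

end IsStrongStruct

theorem Fin.exists_forall_lt_rel_of_sum_lt_card {α : Type*} [Fintype α] {p : ℕ}
    (R : Fin p → Fin p → α → α → Prop) [∀ i j x, DecidablePred (R i j x)]
    (B : Fin p → Fin p → ℝ) (hB : ∀ i j, i < j → ∀ x, (#{y | ¬R i j x y} : ℝ) ≤ B i j)
    (hsum : ∀ j, ∑ i ∈ Iio j, B i j < Fintype.card α) :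
    ∃ s : Fin p → α, ∀ i j, i < j → R i j (s i) (s j) := by
  classical
  suffices ∀ n ≤ p, ∃ s : Fin p → α, ∀ i j : Fin p, i < j → (j : ℕ) < n → R i j (s i) (s j) by
    obtain ⟨s, hs⟩ := this p le_rfl
    exact ⟨s, fun i j hij => hs i j hij j.isLt⟩
  intro n hn
  induction n with
  | zero =>
    have : Nonempty (Fin p → α) := by
      rcases p.eq_zero_or_pos with rfl | hp
      · infer_instance
      · have := hsum ⟨0, hp⟩
        rw [Iio_eq_empty.mpr fun b _ => Nat.zero_le b.val, sum_empty, Nat.cast_pos,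
          Fintype.card_pos_iff] at this
        infer_instance
    exact ⟨Classical.arbitrary _, fun _ _ _ h => absurd h (Nat.not_lt_zero _)⟩
  | succ n ih =>
    obtain ⟨s, hs⟩ := ih (by omega)
    set j₀ : Fin p := ⟨n, hn⟩
    have hbad : (#((Iio j₀).biUnion fun i => ({y | ¬R i j₀ (s i) y} : Finset α)) : ℝ) <
        #(univ : Finset α) :=
      calc _ ≤ ∑ i ∈ Iio j₀, (#{y | ¬R i j₀ (s i) y} : ℝ) := by exact_mod_cast card_biUnion_le
        _ ≤ ∑ i ∈ Iio j₀, B i j₀ := sum_le_sum fun i hi => hB i j₀ (mem_Iio.mp hi) _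
        _ < _ := by simpa using hsum j₀
    obtain ⟨y, -, hy⟩ := exists_mem_notMem_of_card_lt_card (by exact_mod_cast hbad)
    simp only [mem_biUnion, mem_Iio, mem_filter, mem_univ, true_and, not_exists, not_and,
      not_not] at hy
    refine ⟨Function.update s j₀ y, fun i j hij hj => ?_⟩
    have hi : i ≠ j₀ := Fin.ne_of_val_ne (show (i : ℕ) ≠ n by have := Fin.lt_def.mp hij; omega)
    rw [Function.update_of_ne hi]
    rcases (Nat.lt_succ_iff.mp hj).lt_or_eq with hj | hj
    · rw [Function.update_of_ne (Fin.ne_of_val_ne hj.ne)]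
      exact hs i j hij hj
    · obtain rfl : j = j₀ := Fin.ext hj
      rw [Function.update_self]
      exact hy i hij

theorem Fin.sum_Iio_mul_le {p : ℕ} (m : Fin p → ℕ) (j : Fin p) :
    ∑ i ∈ Iio j, m i * m j ≤ (p - 1) * (univ.sup m) ^ 2 :=
  calc ∑ i ∈ Iio j, m i * m j ≤ ∑ _i ∈ Iio j, univ.sup m * univ.sup m :=
        sum_le_sum fun i _ => Nat.mul_le_mul (le_sup (mem_univ _)) (le_sup (mem_univ _))
    _ = j * (univ.sup m) ^ 2 := by rw [Finset.sum_const, Fin.card_Iio, smul_eq_mul, sq]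
    _ ≤ (p - 1) * (univ.sup m) ^ 2 := Nat.mul_le_mul_right _ (by omega)

theorem mul_lt_one_of_le_sub_one_mul_sq {lam : ℝ} {p M N : ℕ} (hN : N ≤ (p - 1) * M ^ 2)
    (hlam : lam < 1 / (((p : ℝ) - 1) ^ 2 * M ^ 2)) : lam * N < 1 := by
  rcases N.eq_zero_or_pos with rfl | hN0
  · simp
  have hp : 2 ≤ p := by
    by_contra hp
    rw [show p - 1 = 0 by omega, zero_mul] at hN
    omega
  have hp1 : (1 : ℝ) ≤ p - 1 := by
    have : (2 : ℝ) ≤ p := by exact_mod_cast hp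
    linarith
  have hNr : (N : ℝ) ≤ ((p : ℝ) - 1) ^ 2 * M ^ 2 :=
    calc (N : ℝ) ≤ ((p : ℝ) - 1) * M ^ 2 := by
          have : ((p - 1 : ℕ) : ℝ) = p - 1 := by rw [Nat.cast_sub (by omega), Nat.cast_one]
          rw [← this]
          exact_mod_cast hN
      _ ≤ ((p : ℝ) - 1) ^ 2 * M ^ 2 := by gcongr; nlinarith
  have hD : 0 < ((p : ℝ) - 1) ^ 2 * M ^ 2 := lt_of_lt_of_le (by exact_mod_cast hN0) hNr
  rw [lt_div_iff₀ hD] at hlam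
  rcases le_or_gt lam 0 with hl | hl
  · nlinarith
  · calc lam * N ≤ lam * (((p : ℝ) - 1) ^ 2 * M ^ 2) := by gcongr
      _ < 1 := hlam

theorem stmt17_general {V : Type*} [Fintype V] (E : V → V → Prop) [DecidableRel E]
    (c lam : ℝ) {k : ℕ} (S : Fin k → Finset V)
    (hS : IsStrongStruct E c lam S) (t : ℕ) (ht : 0 < t)
    (hcard : ∀ i, (S i).card = t)
    (p : ℕ) (m : Fin p → ℕ) (H : ∀ j, Fin (m j) → Fin (m j) → Prop)
    (φ : ∀ j, Fin (m j) → Fin k) (hφinj : ∀ j, Function.Injective (φ j))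
    (hφdisj : ∀ j j', j ≠ j' → ∀ a a', φ j a ≠ φ j' a')
    (hnorm : ∀ j, IsNormal E S t (H j) (φ j))
    (hlam : lam < 1 / (((p : ℝ) - 1) ^ 2 * ((Finset.univ.sup m : ℕ) : ℝ) ^ 2)) :
    ∃ g : (j : Fin p) → Fin (m j) → V,
      (∀ j a, ∃ i, g j a ∈ S i) ∧
      Function.Injective (fun x : Σ j, Fin (m j) => g x.1 x.2) ∧
      (∀ j, ∀ a b, a ≠ b → (H j a b ↔ E (g j a) (g j b))) ∧
      (∀ j j', j ≠ j' → ∀ a a', φ j a < φ j' a' → E (g j a) (g j' a')) := by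
  classical
  choose v hvinj hvmem hvcopy using hnorm
  obtain ⟨s, hs⟩ := Fin.exists_forall_lt_rel_of_sum_lt_card
    (fun j j' x y => ∀ a a', PointsForward E (φ j a) (φ j' a') (v j a x) (v j' a' y))
    (fun j j' => m j * m j' * (lam * t))
    (fun j j' hjj' x => hS.card_filter_not_forall_pointsForward_le hcard
      (hφdisj j j' hjj'.ne) (fun a => hvmem j a x) (hvinj j') (hvmem j'))
    (fun j => by
      have h := mul_lt_one_of_le_sub_one_mul_sq (Fin.sum_Iio_mul_le m j) hlam
      push_cast at h
      rw [← sum_mul, Fintype.card_fin]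
      nlinarith [show (0 : ℝ) < t by exact_mod_cast ht])
  refine ⟨fun j a => v j a (s j), fun j a => ⟨φ j a, hvmem j a (s j)⟩, ?_,
    fun j => hvcopy j (s j), fun j j' hjj' a a' h => ?_⟩
  · rintro ⟨j, a⟩ ⟨j', a'⟩ (h : v j a (s j) = v j' a' (s j'))
    have hφ : φ j a = φ j' a' := by
      by_contra hne
      exact disjoint_left.mp (hS.1 _ _ hne) (hvmem j a (s j)) (h ▸ hvmem j' a' (s j'))
    obtain rfl : j = j' := by_contra fun hne => hφdisj j j' hne a a' hφ
    obtain rfl := hφinj j hφ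
    rfl
  · rcases hjj'.lt_or_gt with hlt | hlt
    · exact (hs j j' hlt a a').1 h
    · exact (hs j' j hlt a' a).2 h

/-- If a strong `(c,λ)`-structure with equal part sizes `t` is `(H_j, φ_j)`-normal for
`j = 1,...,p` with pairwise disjoint images of the `φ_j`, and
`λ < 1/((p-1)²·(max_j |H_j|)²)`, then the tournament induced by `S_1 ∪ ... ∪ S_k`
contains the product tournament `H_1^{φ_1} ⊕ ... ⊕ H_p^{φ_p}`: there are vertices
`g j a ∈ S_1 ∪ ... ∪ S_k`, all distinct, inducing each `H_j` on its factor and with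
all edges between different factors directed according to the combined ordering. -/
theorem stmt17 {V : Type*} [Fintype V] (E : V → V → Prop) [DecidableRel E]
    (hT : IsTournament E) (c lam : ℝ) {k : ℕ} (S : Fin k → Finset V)
    (hS : IsStrongStruct E c lam S) (t : ℕ) (ht : 0 < t)
    (hcard : ∀ i, (S i).card = t)
    (p : ℕ) (m : Fin p → ℕ) (H : ∀ j, Fin (m j) → Fin (m j) → Prop)
    (hHt : ∀ j, IsTournament (H j))
    (φ : ∀ j, Fin (m j) → Fin k) (hφinj : ∀ j, Function.Injective (φ j))
    (hφdisj : ∀ j j', j ≠ j' → ∀ a a', φ j a ≠ φ j' a')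
    (hnorm : ∀ j, IsNormal E S t (H j) (φ j))
    (hlam : lam < 1 / (((p : ℝ) - 1) ^ 2 * ((Finset.univ.sup m : ℕ) : ℝ) ^ 2)) :
    ∃ g : (j : Fin p) → Fin (m j) → V,
      (∀ j a, ∃ i, g j a ∈ S i) ∧
      Function.Injective (fun x : Σ j, Fin (m j) => g x.1 x.2) ∧
      (∀ j, ∀ a b, a ≠ b → (H j a b ↔ E (g j a) (g j b))) ∧
      (∀ j j', j ≠ j' → ∀ a a', φ j a < φ j' a' → E (g j a) (g j' a')) :=
  stmt17_general E c lam S hS t ht hcard p m H φ hφinj hφdisj hnorm hlam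
end

section
/- Let H be a tournament obtained from tournaments H_1, H_2 by substitution (replacing a vertex v of H_1 by a copy of H_2, with every vertex of H_2 inheriting the adjacencies of v). If H_1 and H_2 both have the Erdős–Hajnal property, then H has the Erdős–Hajnal property. -/
/-- A set of vertices induces a transitive subtournament. -/
def IsTransitiveOn {V : Type*} (E : V → V → Prop) (S : Finset V) : Prop :=
  ∀ u ∈ S, ∀ v ∈ S, ∀ w ∈ S, E u v → E v w → E u w

/-- `H` embeds into `T` (i.e. `T` contains a copy of `H` as a subtournament). -/
def Embeds {W V : Type*} (H : W → W → Prop) (T : V → V → Prop) : Prop :=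
  ∃ f : W → V, Function.Injective f ∧ ∀ u v : W, H u v → T (f u) (f v)

/-- `H` has the Erdős–Hajnal property with constant `c`: every `H`-free tournament `T`
contains a transitive subtournament of order at least `|T|^c`. -/
def EHWith {W : Type*} (H : W → W → Prop) (c : ℝ) : Prop :=
  ∀ (V : Type) [Fintype V] (T : V → V → Prop), IsTournament T → ¬ Embeds H T →
    ∃ S : Finset V, IsTransitiveOn T S ∧ (Fintype.card V : ℝ) ^ c ≤ (S.card : ℝ)

/-- `H` has the Erdős–Hajnal property. -/
def HasEH {W : Type*} (H : W → W → Prop) : Prop :=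
  ∃ c : ℝ, 0 < c ∧ EHWith H c

/-- The substitution of the tournament `H2` for the vertex `v` of the tournament `H1`:
the vertex set is `(V(H1) \ {v}) ⊕ V(H2)`, edges inside each part are inherited, and
each vertex of `H2` inherits the adjacencies of `v`. -/
def Subst {W1 W2 : Type*} (H1 : W1 → W1 → Prop) (H2 : W2 → W2 → Prop) (v : W1) :
    ({u : W1 // u ≠ v} ⊕ W2) → ({u : W1 // u ≠ v} ⊕ W2) → Prop
  | Sum.inl a, Sum.inl b => H1 a.1 b.1
  | Sum.inl a, Sum.inr _ => H1 a.1 v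
  | Sum.inr _, Sum.inl b => H1 v b.1
  | Sum.inr a, Sum.inr b => H2 a b

open Finset

section Tournament

variable {V : Type*} {T : V → V → Prop}

lemma IsTournament.subrel (hT : IsTournament T) (p : V → Prop) : IsTournament (Subrel T p) :=
  ⟨fun a => hT.1 a, fun a b hab => hT.2 a b (Subtype.coe_ne_coe.mpr hab)⟩

lemma IsTransitiveOn.map_subtype {p : V → Prop} {S : Finset (Subtype p)}
    (hS : IsTransitiveOn (Subrel T p) S) : IsTransitiveOn T (S.map (.subtype p)) := by
  simp only [IsTransitiveOn, mem_map, Function.Embedding.coe_subtype, forall_exists_index,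
    and_imp, forall_apply_eq_imp_iff₂]
  exact hS

lemma IsTournament.isTransitiveOn_of_card_le_two (hT : IsTournament T) {S : Finset V}
    (hS : #S ≤ 2) : IsTransitiveOn T S := by
  intro u hu v hv w hw huv hvw
  have hne : u ≠ v := fun h => hT.1 v (h ▸ huv)
  -- two distinct edges inside a set of at most two vertices must be `u → v → u`
  obtain rfl : u = w := by
    by_contra huw
    have hvw' : v ≠ w := fun h => hT.1 w (h ▸ hvw)
    exact absurd hS (not_le.mpr (two_lt_card.mpr ⟨u, hu, v, hv, w, hw, hne, huw, hvw'⟩))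
  exact absurd hvw ((hT.2 u v hne).mp huv)

end Tournament

section ErdosHajnal

variable {W : Type*} {H : W → W → Prop} {c : ℝ}

lemma EHWith.exists_of_not_embeds_subrel (hE : EHWith H c) {V : Type} {T : V → V → Prop}
    (hT : IsTournament T) (X : Finset V) (hX : ¬ Embeds H (Subrel T (· ∈ X))) :
    ∃ S : Finset V, IsTransitiveOn T S ∧ (#X : ℝ) ^ c ≤ #S := by
  obtain ⟨S, hS, hcard⟩ := hE _ _ (hT.subrel _) hX
  exact ⟨_, hS.map_subtype, by simpa using hcard⟩

lemma EHWith.of_infinite [Infinite W] (hE : EHWith H c) {W' : Type*} (H' : W' → W' → Prop) :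
    EHWith H' c :=
  fun _ _ T hT _ => hE _ T hT fun ⟨f, hf, _⟩ => not_injective_infinite_finite f hf

/-- Tournaments with at most `n₀` vertices are handled by a transitive set of size `min n 2`,
which beats `n ^ c` once `c ≤ 1 / (n₀ + 1)`. -/
lemma hasEH_of_eventually (hc : 0 < c) (n₀ : ℕ)
    (h : ∀ (V : Type) [Fintype V] (T : V → V → Prop), IsTournament T → ¬ Embeds H T →
      n₀ < Fintype.card V → ∃ S : Finset V, IsTransitiveOn T S ∧ (Fintype.card V : ℝ) ^ c ≤ #S) :
    HasEH H := by
  set c' := min c ((n₀ + 1 : ℕ) : ℝ)⁻¹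
  have hc' : 0 < c' := lt_min hc (by positivity)
  refine ⟨c', hc', fun V _ T hT hfree => ?_⟩
  set n := Fintype.card V
  by_cases hn : n₀ < n
  · obtain ⟨S, hS, hcard⟩ := h V T hT hfree hn
    refine ⟨S, hS, le_trans ?_ hcard⟩
    exact Real.rpow_le_rpow_of_exponent_le (by exact_mod_cast (by omega : 1 ≤ n)) (min_le_left _ _)
  obtain ⟨S, -, hS⟩ := exists_subset_card_eq (s := (univ : Finset V)) (n := min n 2)
    (by simp [n])
  refine ⟨S, hT.isTransitiveOn_of_card_le_two (hS ▸ min_le_right _ _), ?_⟩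
  rw [hS]
  rcases (by omega : n = 0 ∨ n = 1 ∨ 2 ≤ n) with h0 | h1 | h2
  · simp [h0, Real.zero_rpow hc'.ne']
  · simp [h1]
  · have hn2 : (n : ℝ) ≤ 2 ^ (n₀ + 1) := by
      exact_mod_cast (Nat.lt_two_pow_self.trans (Nat.pow_lt_pow_right one_lt_two (by omega))).le
    calc (n : ℝ) ^ c' ≤ (n : ℝ) ^ ((n₀ + 1 : ℕ) : ℝ)⁻¹ :=
          Real.rpow_le_rpow_of_exponent_le (by exact_mod_cast (by omega : 1 ≤ n)) (min_le_right _ _)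
      _ ≤ ((2 : ℝ) ^ (n₀ + 1)) ^ ((n₀ + 1 : ℕ) : ℝ)⁻¹ := by gcongr
      _ = 2 := Real.pow_rpow_inv_natCast (by norm_num) (by omega)
      _ = ((min n 2 : ℕ) : ℝ) := by simp [h2]

end ErdosHajnal

section Copies

variable {W V : Type*} [Fintype W] [Fintype V]

open Classical in
noncomputable def copies (H : W → W → Prop) (T : V → V → Prop) : Finset (W → V) :=
  {f | Function.Injective f ∧ ∀ a b, H a b → T (f a) (f b)}

lemma mem_copies {H : W → W → Prop} {T : V → V → Prop} {f : W → V} :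
    f ∈ copies H T ↔ Function.Injective f ∧ ∀ a b, H a b → T (f a) (f b) := by
  simp [copies]

/-- Averaging over all `m`-subsets: each copy of `H` lies in `(n-k).choose (m-k)` of them, so if
the copies are too few, some `m`-subset contains none. -/
lemma exists_card_eq_not_embeds_subrel (H : W → W → Prop) (T : V → V → Prop) {m : ℕ}
    (hm : m ≤ Fintype.card V)
    (hcopies : #(copies H T) * m.choose (Fintype.card W) <
      (Fintype.card V).choose (Fintype.card W)) :
    ∃ U : Finset V, #U = m ∧ ¬ Embeds H (Subrel T (· ∈ U)) := by
  classical
  set k := Fintype.card W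
  set n := Fintype.card V
  by_cases hkm : m < k
  · obtain ⟨U, -, hU⟩ := exists_subset_card_eq (s := (univ : Finset V)) (by simpa using hm)
    refine ⟨U, hU, fun ⟨f, hf, _⟩ => ?_⟩
    have := Fintype.card_le_of_injective f hf
    simp only [Fintype.card_coe, hU] at this
    omega
  by_contra! hall
  have hcover : ∀ U ∈ powersetCard m (univ : Finset V),
      1 ≤ #((copies H T).bipartiteAbove (fun U f => univ.image f ⊆ U) U) := by
    intro U hU
    obtain ⟨f, hf, hfT⟩ := hall U (mem_powersetCard.mp hU).2
    refine one_le_card.mpr ⟨Subtype.val ∘ f, mem_filter.mpr ⟨?_, ?_⟩⟩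
    · exact mem_copies.mpr ⟨Subtype.val_injective.comp hf, hfT⟩
    · simp [image_subset_iff]
  have hsupersets : ∀ f ∈ copies H T,
      #((powersetCard m univ).bipartiteBelow (fun U f => univ.image f ⊆ U) f) ≤
        (n - k).choose (m - k) := by
    intro f hf
    have himage : #(univ.image f) = k := card_image_of_injective _ (mem_copies.mp hf).1
    refine (card_filter_powersetCard_subset _ _ _ (subset_univ _) (by omega)).trans_le ?_
    rw [himage, card_univ]
  have hdouble := card_mul_le_card_mul _ hcover hsupersets
  rw [card_powersetCard, card_univ, mul_one] at hdouble
  have hX : 0 < (n - k).choose (m - k) := Nat.choose_pos (by omega)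
  refine lt_irrefl (n.choose k * (n - k).choose (m - k)) ?_
  calc n.choose k * (n - k).choose (m - k) = n.choose m * m.choose k :=
        (Nat.choose_mul (not_lt.mp hkm)).symm
    _ ≤ #(copies H T) * (n - k).choose (m - k) * m.choose k := Nat.mul_le_mul_right _ hdouble
    _ = #(copies H T) * m.choose k * (n - k).choose (m - k) := by ring
    _ < n.choose k * (n - k).choose (m - k) := Nat.mul_lt_mul_of_pos_right hcopies hX

end Copies

section Extensions

variable {W V : Type*} [Fintype W] [DecidableEq W] [Fintype V] (H : W → W → Prop)
  (T : V → V → Prop) (v : W)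

open Classical in
/-- The images of `v` in the copies of `H` that agree with `g` away from `v`. -/
noncomputable def extensions (g : {u // u ≠ v} → V) : Finset V :=
  {x | (Equiv.funSplitAt v V).symm (x, g) ∈ copies H T}

lemma card_copies_le_sum_card_extensions :
    #(copies H T) ≤ ∑ g : {u // u ≠ v} → V, #(extensions H T v g) := by
  classical
  rw [card_eq_sum_card_fiberwise (f := fun f => (Equiv.funSplitAt v V f).2) (t := univ)
    (fun _ _ => mem_coe.mpr (mem_univ _))]
  gcongr with g
  refine card_le_card_of_injOn (· v) (fun f hf => ?_) (fun f hf f' hf' hff' => ?_)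
  · obtain ⟨hf, rfl⟩ := mem_filter.mp hf
    have : (Equiv.funSplitAt v V).symm (Equiv.funSplitAt v V f) ∈ copies H T := by
      rwa [Equiv.symm_apply_apply]
    simpa [extensions] using this
  · obtain ⟨-, hfg⟩ := mem_filter.mp hf
    obtain ⟨-, hfg'⟩ := mem_filter.mp hf'
    exact (Equiv.funSplitAt v V).injective (Prod.ext hff' (hfg.trans hfg'.symm))

variable {H T v}

lemma not_embeds_subrel_extensions {W₂ : Type*} {H₂ : W₂ → W₂ → Prop}
    (hfree : ¬ Embeds (Subst H H₂ v) T) {g : {u // u ≠ v} → V} {x₀ : V}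
    (hx₀ : x₀ ∈ extensions H T v g) : ¬ Embeds H₂ (Subrel T (· ∈ extensions H T v g)) := by
  rintro ⟨h, hinj, hedge⟩
  set F := fun x => (Equiv.funSplitAt v V).symm (x, g)
  have hcopy : ∀ x ∈ extensions H T v g, F x ∈ copies H T :=
    fun x hx => by simpa [extensions] using hx
  have hinj' x hx := (mem_copies.mp (hcopy x hx)).1
  have hedge' x hx := (mem_copies.mp (hcopy x hx)).2
  have hFv x : F x v = x := by simp [F]
  have hFa x (a : {u // u ≠ v}) : F x a = g a := by simp [F, a.2]
  refine hfree ⟨Sum.elim g (fun w => h w), ?_, ?_⟩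
  · rintro (a | w) (b | w') hab <;> simp only [Sum.elim_inl, Sum.elim_inr] at hab
    · refine congrArg Sum.inl (Subtype.ext (hinj' x₀ hx₀ ?_))
      rw [hFa, hFa, hab]
    · refine absurd (hinj' _ (h w').2 ?_) a.2
      rw [hFa, hFv, hab]
    · refine absurd (hinj' _ (h w).2 ?_) b.2
      rw [hFa, hFv, hab]
    · exact congrArg Sum.inr (hinj (Subtype.ext hab))
  · rintro (a | w) (b | w') hab
    · simpa only [Sum.elim_inl, hFa] using hedge' x₀ hx₀ a b hab
    · simpa only [Sum.elim_inl, Sum.elim_inr, hFa, hFv] using hedge' _ (h w').2 a v hab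
    · simpa only [Sum.elim_inl, Sum.elim_inr, hFa, hFv] using hedge' _ (h w).2 v b hab
    · exact hedge w w' hab

end Extensions

open Nat in
/-- The counting condition of `exists_card_eq_not_embeds_subrel` for at most `n ^ (k-1) √n`
copies, `√n = x ^ (2k)`, and subsets of size `m ≈ n ^ (1 / 4k)`. -/
lemma mul_choose_lt_choose {k m n N : ℕ} {x : ℝ} (hk : 1 ≤ k) (hx : 4 < x)
    (hn : (n : ℝ) = x ^ (4 * k)) (hm : (m : ℝ) ≤ 2 * x)
    (hN : (N : ℝ) ≤ (n : ℝ) ^ (k - 1) * x ^ (2 * k)) : N * m.choose k < n.choose k := by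
  obtain ⟨j, rfl⟩ : ∃ j, k = j + 1 := ⟨k - 1, by omega⟩
  rw [Nat.add_sub_cancel] at hN
  have hx0 : 0 < x := by linarith
  have h2k : (2 * (j + 1) : ℝ) ≤ n := by
    have : 4 * (j + 1) < 4 ^ (4 * (j + 1)) := Nat.lt_pow_self (by norm_num)
    rw [hn]
    calc (2 * (j + 1) : ℝ) ≤ ((4 ^ (4 * (j + 1)) : ℕ) : ℝ) := by exact_mod_cast (by omega)
      _ ≤ x ^ (4 * (j + 1)) := by push_cast; gcongr
  have hjn : j + 1 ≤ n + 1 := by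
    have : 2 * (j + 1) ≤ n := by exact_mod_cast h2k
    omega
  have hsub : (n : ℝ) / 2 ≤ ((n + 1 - (j + 1) : ℕ) : ℝ) := by
    rw [Nat.cast_sub hjn]; push_cast; linarith
  have hfour : (2 : ℝ) ^ (j + 1) * 2 ^ (j + 1) < x ^ (j + 1) := by
    rw [← mul_pow]; gcongr; linarith
  set P := x ^ (4 * (j + 1) * j) * x ^ (2 * (j + 1)) * x ^ (j + 1)
  have hP : 0 < P := by positivity
  rw [← Nat.cast_lt (α := ℝ), Nat.cast_mul]
  calc (N : ℝ) * m.choose (j + 1)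
      ≤ (n ^ j * x ^ (2 * (j + 1))) * (m ^ (j + 1) / (j + 1)!) :=
        mul_le_mul hN (choose_le_pow_div _ _) (by positivity) (by positivity)
    _ ≤ ((x ^ (4 * (j + 1))) ^ j * x ^ (2 * (j + 1))) * ((2 * x) ^ (j + 1) / (j + 1)!) := by
        rw [hn]; gcongr
    _ = P * 2 ^ (j + 1) / (j + 1)! := by rw [← pow_mul, mul_pow]; ring
    _ < P * (x ^ (j + 1) / 2 ^ (j + 1)) / (j + 1)! := by
        gcongr; rw [lt_div_iff₀ (by positivity)]; exact hfour
    _ = (x ^ (4 * (j + 1)) / 2) ^ (j + 1) / (j + 1)! := by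
        rw [div_pow, ← pow_mul]; ring
    _ ≤ ((n + 1 - (j + 1) : ℕ) : ℝ) ^ (j + 1) / (j + 1)! := by
        rw [← hn]; gcongr
    _ ≤ n.choose (j + 1) := by exact_mod_cast pow_le_choose (j + 1) n

section Substitution

variable {W₁ W₂ : Type*} [Fintype W₁] [DecidableEq W₁] {H₁ : W₁ → W₁ → Prop}
  {H₂ : W₂ → W₂ → Prop} {v : W₁} {c₁ c₂ : ℝ}

lemma exists_transitive_of_not_embeds_subst (hc₁ : 0 ≤ c₁) (hc₂ : 0 ≤ c₂)
    (hE₁ : EHWith H₁ c₁) (hE₂ : EHWith H₂ c₂) {V : Type} [Fintype V] {T : V → V → Prop}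
    (hT : IsTournament T) (hfree : ¬ Embeds (Subst H₁ H₂ v) T) {x : ℝ} (hx : 4 < x)
    (hxn : (Fintype.card V : ℝ) = x ^ (4 * Fintype.card W₁)) :
    ∃ S : Finset V, IsTransitiveOn T S ∧ x ^ min (2 * Fintype.card W₁ * c₂) c₁ ≤ #S := by
  classical
  set k := Fintype.card W₁
  have hk : 1 ≤ k := Fintype.card_pos_iff.mpr ⟨v⟩
  have hx1 : 1 ≤ x := by linarith
  by_cases hA : ∃ g, x ^ (2 * k) ≤ #(extensions H₁ T v g)
  · obtain ⟨g, hg⟩ := hA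
    obtain ⟨x₀, hx₀⟩ : (extensions H₁ T v g).Nonempty :=
      card_pos.mp (by exact_mod_cast (by positivity : (0 : ℝ) < x ^ (2 * k)).trans_le hg)
    obtain ⟨S, hS, hcard⟩ :=
      hE₂.exists_of_not_embeds_subrel hT _ (not_embeds_subrel_extensions hfree hx₀)
    refine ⟨S, hS, le_trans ?_ hcard⟩
    calc x ^ min (2 * k * c₂) c₁ ≤ x ^ ((2 * k : ℕ) * c₂ : ℝ) := by
          push_cast; exact Real.rpow_le_rpow_of_exponent_le hx1 (min_le_left _ _)
      _ = (x ^ (2 * k)) ^ c₂ := by rw [Real.rpow_mul (by linarith), Real.rpow_natCast]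
      _ ≤ _ := Real.rpow_le_rpow (by positivity) hg hc₂
  push Not at hA
  set m := ⌈x⌉₊
  have hm : (m : ℝ) ≤ 2 * x := (Nat.ceil_lt_add_one (by linarith)).le.trans (by linarith)
  have hmn : m ≤ Fintype.card V := by
    have : x ^ 2 ≤ x ^ (4 * k) := pow_le_pow_right₀ hx1 (by omega)
    exact_mod_cast hm.trans (by nlinarith : 2 * x ≤ x ^ (4 * k)) |>.trans hxn.ge
  have hN : (#(copies H₁ T) : ℝ) ≤ (Fintype.card V : ℝ) ^ (k - 1) * x ^ (2 * k) :=
    calc (#(copies H₁ T) : ℝ) ≤ ∑ g : {u // u ≠ v} → V, (#(extensions H₁ T v g) : ℝ) := by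
          exact_mod_cast card_copies_le_sum_card_extensions H₁ T v
      _ ≤ ∑ _g : {u // u ≠ v} → V, x ^ (2 * k) := sum_le_sum fun g _ => (hA g).le
      _ = _ := by simp [k]
  obtain ⟨U, hU, hUfree⟩ :=
    exists_card_eq_not_embeds_subrel H₁ T hmn (mul_choose_lt_choose hk hx hxn hm hN)
  obtain ⟨S, hS, hcard⟩ := hE₁.exists_of_not_embeds_subrel hT U hUfree
  refine ⟨S, hS, le_trans ?_ hcard⟩
  calc x ^ min (2 * k * c₂) c₁ ≤ x ^ c₁ := Real.rpow_le_rpow_of_exponent_le hx1 (min_le_right _ _)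
    _ ≤ (m : ℝ) ^ c₁ := Real.rpow_le_rpow (by linarith) (Nat.le_ceil x) hc₁
    _ = (#U : ℝ) ^ c₁ := by rw [hU]

end Substitution

theorem stmt19_general {W1 W2 : Type} (H1 : W1 → W1 → Prop) (H2 : W2 → W2 → Prop) (v : W1)
    (h1 : HasEH H1) (h2 : HasEH H2) : HasEH (Subst H1 H2 v) := by
  obtain ⟨c₁, hc₁, hE₁⟩ := h1
  obtain ⟨c₂, hc₂, hE₂⟩ := h2
  rcases finite_or_infinite W1 with _ | _
  swap
  · exact ⟨c₁, hc₁, hE₁.of_infinite _⟩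
  classical
  have := Fintype.ofFinite W1
  set k := Fintype.card W1
  have hk : 0 < k := Fintype.card_pos_iff.mpr ⟨v⟩
  have hc : 0 < min (2 * k * c₂) c₁ := lt_min (by positivity) hc₁
  refine hasEH_of_eventually (c := ((4 * k : ℕ) : ℝ)⁻¹ * min (2 * k * c₂) c₁) (by positivity)
    (4 ^ (4 * k)) fun V _ T hT hfree hn => ?_
  set x := (Fintype.card V : ℝ) ^ ((4 * k : ℕ) : ℝ)⁻¹
  have hxn : (Fintype.card V : ℝ) = x ^ (4 * k) :=
    (Real.rpow_inv_natCast_pow (by positivity) (by omega)).symm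
  have hx : 4 < x := lt_of_pow_lt_pow_left₀ (4 * k) (by positivity) (by rw [← hxn]; exact_mod_cast hn)
  obtain ⟨S, hS, hcard⟩ :=
    exists_transitive_of_not_embeds_subst hc₁.le hc₂.le hE₁ hE₂ hT hfree hx hxn
  exact ⟨S, hS, by rwa [Real.rpow_mul (by positivity)]⟩

/-- If tournaments `H1` and `H2` have the Erdős–Hajnal property, then so does the
tournament obtained from `H1` by substituting `H2` for a vertex `v`. -/
theorem stmt19 {W1 W2 : Type} (H1 : W1 → W1 → Prop) (H2 : W2 → W2 → Prop)
    (h1T : IsTournament H1) (h2T : IsTournament H2) (v : W1)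
    (h1 : HasEH H1) (h2 : HasEH H2) : HasEH (Subst H1 H2 v) :=
  stmt19_general H1 H2 v h1 h2
end
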